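/- arXiv:0910.3091 — 2 statements merged into one kernel-verified Lean document; each statement's English description precedes it below -/
import Mathlib

section
/- For any compact Hausdorff space K, the hereditary density hd(K) equals the supremum of the densities d(C) over all closed subspaces C ⊆ K. -/
/-!
Let `κ` be the supremum of the densities of closed subsets; `κ ≥ ℵ₀` unless `K` is finite, in
which case every subset is closed. The key step is that the tightness of `K` is at most `κ`:
a set `C` containing the closure of each of its subsets of size `≤ κ` is closed. Otherwise,
starting from a point of `closure C \ C`, compactness and regularity let one build a free
sequence in `C` of length `κ⁺`, and the closure of a free sequence of length `λ` has density
at least `λ`. Given tightness, a dense subset of `closure Y` of size `≤ κ` lies in the closure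
of a subset of `Y` of size `≤ κ`, which is then dense in `Y`.
-/

open Cardinal

universe u

/-- The density of a topological space: the least cardinality of a dense subset. -/
noncomputable def density (X : Type u) [TopologicalSpace X] : Cardinal.{u} :=
  sInf {c : Cardinal.{u} | ∃ s : Set X, Dense s ∧ #s = c}

/-- The hereditary density of a topological space: the supremum of the densities of
all its subspaces. -/
noncomputable def hereditaryDensity (X : Type u) [TopologicalSpace X] : Cardinal.{u} :=
  ⨆ Y : Set X, density Y

open Set

section Density

variable {X : Type u} [TopologicalSpace X]

theorem exists_dense_mk_eq_density (X : Type u) [TopologicalSpace X] :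
    ∃ s : Set X, Dense s ∧ #s = density X :=
  csInf_mem (s := {c | ∃ s : Set X, Dense s ∧ #s = c}) ⟨_, univ, dense_univ, rfl⟩

theorem density_le_mk {s : Set X} (hs : Dense s) : density X ≤ #s :=
  csInf_le' ⟨s, hs, rfl⟩

theorem density_le_mk_of_subset_closure {Y A : Set X} (hAY : A ⊆ Y) (hYA : Y ⊆ closure A) :
    density Y ≤ #A := by
  have hdense : Dense ((↑) ⁻¹' A : Set Y) := by
    intro y
    rw [closure_subtype, image_preimage_eq_inter_range, Subtype.range_coe,
      inter_eq_self_of_subset_left hAY]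
    exact hYA y.2
  exact (density_le_mk hdense).trans (mk_preimage_of_injective _ _ Subtype.coe_injective)

theorem aleph0_le_density [T1Space X] [Infinite X] : ℵ₀ ≤ density X := by
  obtain ⟨s, hs, hcard⟩ := exists_dense_mk_eq_density X
  rw [← hcard]
  by_contra! hlt
  have hfin : s.Finite := lt_aleph0_iff_set_finite.1 hlt
  have : s = Set.univ := by rw [← hs.closure_eq, hfin.isClosed.closure_eq]
  exact infinite_univ (this ▸ hfin)

end Density

theorem Cardinal.mk_iUnion_le_of_le {α ι : Type u} {f : ι → Set α} {κ : Cardinal.{u}}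
    (hκ : ℵ₀ ≤ κ) (hι : #ι ≤ κ) (hf : ∀ i, #(f i) ≤ κ) : #(⋃ i, f i) ≤ κ :=
  calc #(⋃ i, f i) ≤ #ι * ⨆ i, #(f i) := mk_iUnion_le f
    _ ≤ κ * κ := mul_le_mul' hι (ciSup_le' hf)
    _ = κ := mul_eq_self hκ

theorem WellFoundedLT.exists_forall_of_forall_exists {I α : Type*} [Preorder I] [WellFoundedLT I]
    [Nonempty α] (P : ∀ i : I, (Iio i → α) → α → Prop)
    (h : ∀ i (g : Iio i → α),
      (∀ j : Iio i, P j (fun k => g ⟨k, k.2.trans j.2⟩) (g j)) → ∃ a, P i g a) :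
    ∃ f : I → α, ∀ i, P i (fun j => f j) (f i) := by
  classical
  let F : ∀ i : I, (∀ j, j < i → α) → α := fun i prev =>
    if hex : ∃ a, P i (fun j => prev j j.2) a then hex.choose else Classical.arbitrary α
  refine ⟨wellFounded_lt.fix F, fun i => ?_⟩
  induction i using WellFoundedLT.induction with
  | _ i IH =>
    have hex := h i (fun j => wellFounded_lt.fix F j) fun j => IH j j.2
    rw [wellFounded_lt.fix_eq F i]
    simp only [F, dif_pos hex]
    exact hex.choose_spec

section FreeSequence

variable {X : Type u} [TopologicalSpace X]

/-- Weaker than the usual `Disjoint (closure (x '' Iio i)) (closure (x '' Ici i))`. -/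
def IsFreeSequence {I : Type*} [Preorder I] (x : I → X) : Prop :=
  ∀ i, x i ∉ closure (x '' Iio i) ∪ closure (x '' Ioi i)

theorem isFreeSequence_of_isOpen {I : Type*} [LinearOrder I] [WellFoundedLT I] {x : I → X}
    (U : I → Set X) (hU : ∀ i, IsOpen (U i)) (hmono : Monotone U)
    (hclosure : ∀ i, closure (x '' Iio i) ⊆ U i) (hx : ∀ i, x i ∉ U i) : IsFreeSequence x := by
  rintro i (h | h)
  · exact hx i (hclosure i h)
  · rcases (Ioi i).eq_empty_or_nonempty with hempty | hne
    · simp [hempty] at h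
    · set m := wellFounded_lt.min (Ioi i) hne
      have hout : x '' Ioi i ⊆ (U m)ᶜ := by
        rintro _ ⟨j, hj, rfl⟩ hxj
        exact hx j (hmono (wellFounded_lt.min_le hj) hxj)
      have hin : x i ∈ U m :=
        hclosure m (subset_closure (mem_image_of_mem x (wellFounded_lt.min_mem _ hne)))
      exact closure_minimal hout (hU m).isClosed_compl h hin

theorem IsFreeSequence.mk_le_density {I : Type u} [LinearOrder I] {x : I → X}
    (hx : IsFreeSequence x) : #I ≤ density (closure (range x)) := by
  obtain ⟨s, hs, hcard⟩ := exists_dense_mk_eq_density (closure (range x))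
  have hpick : ∀ i, ∃ d ∈ s, (d : X) ∉ closure (x '' Iio i) ∪ closure (x '' Ioi i) := fun i =>
    hs.exists_mem_open ((isClosed_closure.union isClosed_closure).isOpen_compl.preimage
      continuous_subtype_val) ⟨⟨x i, subset_closure (mem_range_self i)⟩, hx i⟩
  choose d hds hd using hpick
  have hsplit : ∀ a b, a < b → range x ⊆ x '' Iio b ∪ x '' Ioi a := by
    rintro a b hab _ ⟨j, rfl⟩
    rcases lt_or_ge j b with hj | hj
    · exact Or.inl (mem_image_of_mem x hj)
    · exact Or.inr (mem_image_of_mem x (hab.trans_le hj))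
  have hne : ∀ a b, a < b → d a ≠ d b := by
    intro a b hab hdab
    have hmem := closure_mono (hsplit a b hab) (d a).2
    rw [closure_union] at hmem
    rcases hmem with h | h
    · exact hd b (Or.inl (hdab ▸ h))
    · exact hd a (Or.inr h)
  have hinj : Function.Injective fun i => (⟨d i, hds i⟩ : s) :=
    .of_lt_imp_ne fun a b hab hdab => hne a b hab (congrArg Subtype.val hdab)
  exact hcard ▸ mk_le_of_injective hinj

end FreeSequence

section KappaClosed

variable {X : Type u} [TopologicalSpace X] {κ : Cardinal.{u}}

def IsKappaClosed (κ : Cardinal.{u}) (C : Set X) : Prop :=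
  ∀ B ⊆ C, #B ≤ κ → closure B ⊆ C

def kappaClosure (κ : Cardinal.{u}) (Y : Set X) : Set X :=
  {z | ∃ B ⊆ Y, #B ≤ κ ∧ z ∈ closure B}

theorem subset_kappaClosure (hκ : 1 ≤ κ) (Y : Set X) : Y ⊆ kappaClosure κ Y := fun y hy =>
  ⟨{y}, singleton_subset_iff.2 hy, by rwa [mk_singleton], subset_closure rfl⟩

theorem exists_subset_closure_of_subset_kappaClosure (hκ : ℵ₀ ≤ κ) {Y B : Set X}
    (hB : B ⊆ kappaClosure κ Y) (hBκ : #B ≤ κ) : ∃ E ⊆ Y, #E ≤ κ ∧ B ⊆ closure E := by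
  choose T hTY hTκ hT using fun b : B => hB b.2
  refine ⟨⋃ b, T b, iUnion_subset hTY, mk_iUnion_le_of_le hκ hBκ hTκ, fun b hb => ?_⟩
  exact closure_mono (subset_iUnion T ⟨b, hb⟩) (hT ⟨b, hb⟩)

theorem isKappaClosed_kappaClosure (hκ : ℵ₀ ≤ κ) (Y : Set X) :
    IsKappaClosed κ (kappaClosure κ Y) := by
  intro B hB hBκ z hz
  obtain ⟨E, hEY, hEκ, hBE⟩ := exists_subset_closure_of_subset_kappaClosure hκ hB hBκ
  exact ⟨E, hEY, hEκ, closure_minimal hBE isClosed_closure hz⟩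

variable [CompactSpace X] [RegularSpace X] {C : Set X} {x : X}

theorem IsKappaClosed.mem_closure_diff_iUnion (hC : IsKappaClosed κ C) (hx : x ∈ closure C)
    {J : Type u} (hJ : #J ≤ κ) (U : J → Set X) (hU : ∀ j, IsOpen (U j))
    (hdir : Directed (· ⊆ ·) U) (hxU : ∀ j, x ∈ closure (C \ U j)) :
    x ∈ closure (C \ ⋃ j, U j) := by
  rcases isEmpty_or_nonempty J with hJe | hJne
  · simpa using hx
  rw [mem_closure_iff_nhds]
  intro N hN
  by_contra hempty
  obtain ⟨V, hV, hVc, hVN⟩ := exists_mem_nhds_isClosed_subset hN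
  choose y hyV hyC using fun j => mem_closure_iff_nhds.1 (hxU j) V hV
  have hyκ : #(range y) ≤ κ := mk_range_le.trans hJ
  have hcover : closure (range y) ⊆ ⋃ j, U j := by
    intro z hz
    by_contra hzU
    have hzC : z ∈ C := hC _ (range_subset_iff.2 fun j => (hyC j).1) hyκ hz
    have hzV : z ∈ V := closure_minimal (range_subset_iff.2 hyV) hVc hz
    exact hempty ⟨z, hVN hzV, hzC, hzU⟩
  obtain ⟨j, hj⟩ := isClosed_closure.isCompact.elim_directed_cover U hU hcover hdir
  exact (hyC j).2 (hj (subset_closure (mem_range_self j)))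

theorem IsKappaClosed.exists_freeSequence_step (hC : IsKappaClosed κ C) (hx : x ∈ closure C)
    (hxC : x ∉ C) {J : Type u} (hJ : #J ≤ κ) (U : J → Set X) (hU : ∀ j, IsOpen (U j))
    (hdir : Directed (· ⊆ ·) U) (hxU : ∀ j, x ∈ closure (C \ U j)) (p : J → X)
    (hp : ∀ j, p j ∈ C) :
    ∃ q V, IsOpen V ∧ (∀ j, U j ⊆ V) ∧ closure (range p) ⊆ V ∧ x ∈ closure (C \ V) ∧
      q ∈ C ∧ q ∉ V := by
  have hxp : x ∉ closure (range p) := fun h =>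
    hxC (hC _ (range_subset_iff.2 hp) (mk_range_le.trans hJ) h)
  obtain ⟨N, hN, hNc, hNp⟩ :=
    exists_mem_nhds_isClosed_subset (isClosed_closure.isOpen_compl.mem_nhds hxp)
  have hxN : x ∉ closure Nᶜ := by
    rw [closure_compl, mem_compl_iff, not_not]
    exact mem_interior_iff_mem_nhds.2 hN
  set V := (⋃ j, U j) ∪ Nᶜ
  have hxV : x ∈ closure (C \ V) := by
    rw [← sdiff_sdiff]
    exact closure_sdiff ⟨hC.mem_closure_diff_iUnion hx hJ U hU hdir hxU, hxN⟩
  obtain ⟨q, hq⟩ := Set.Nonempty.of_closure ⟨x, hxV⟩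
  exact ⟨q, V, (isOpen_iUnion hU).union hNc.isOpen_compl,
    fun j => (subset_iUnion U j).trans subset_union_left,
    fun z hz => Or.inr fun hzN => hNp hzN hz, hxV, hq.1, hq.2⟩

theorem IsKappaClosed.exists_isFreeSequence (hC : IsKappaClosed κ C) (hx : x ∈ closure C)
    (hxC : x ∉ C) {I : Type u} [LinearOrder I] [WellFoundedLT I] (hI : ∀ i : I, #(Iio i) ≤ κ) :
    ∃ xs : I → X, IsFreeSequence xs := by
  have : Nonempty X := ⟨x⟩
  -- `a = (xᵢ, Uᵢ)`: the open sets `Uᵢ` increase and swallow the earlier points but not `xᵢ`,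
  -- while `x ∈ closure (C \ Uᵢ)` keeps room for the next point.
  let P : ∀ i : I, (Iio i → X × Set X) → X × Set X → Prop := fun _ g a =>
    IsOpen a.2 ∧ (∀ j, (g j).2 ⊆ a.2) ∧ closure (range fun j => (g j).1) ⊆ a.2 ∧
      x ∈ closure (C \ a.2) ∧ a.1 ∈ C ∧ a.1 ∉ a.2
  obtain ⟨f, hf⟩ := WellFoundedLT.exists_forall_of_forall_exists P fun i g hg => by
    have hmono : Monotone fun j => (g j).2 := by
      intro j k hjk
      rcases hjk.lt_or_eq with h | rfl
      · exact (hg k).2.1 ⟨j, h⟩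
      · rfl
    obtain ⟨q, V, hV⟩ := hC.exists_freeSequence_step hx hxC (hI i) (fun j => (g j).2)
      (fun j => (hg j).1) hmono.directed_le (fun j => (hg j).2.2.2.1) (fun j => (g j).1)
      (fun j => (hg j).2.2.2.2.1)
    exact ⟨(q, V), hV⟩
  refine ⟨fun i => (f i).1, isFreeSequence_of_isOpen (fun i => (f i).2) (fun i => (hf i).1)
    (fun a b hab => ?_) (fun i => ?_) (fun i => (hf i).2.2.2.2.2)⟩
  · rcases hab.lt_or_eq with h | rfl
    · exact (hf b).2.1 ⟨a, h⟩
    · rfl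
  · rw [image_eq_range]
    exact (hf i).2.2.1

theorem IsKappaClosed.isClosed (hcl : ∀ G : Set X, IsClosed G → density G ≤ κ)
    (hC : IsKappaClosed κ C) : IsClosed C := by
  refine closure_subset_iff_isClosed.1 fun x hx => ?_
  by_contra hxC
  obtain ⟨xs, hxs⟩ := hC.exists_isFreeSequence hx hxC (I := (Order.succ κ).ord.ToType)
    fun i => Order.lt_succ_iff.1 (by simpa using mk_Iio_lt i)
  have hle := hxs.mk_le_density.trans (hcl _ isClosed_closure)
  rw [mk_ord_toType] at hle
  exact (Order.lt_succ κ).not_ge hle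

theorem closure_subset_kappaClosure (hκ : ℵ₀ ≤ κ) (hcl : ∀ G : Set X, IsClosed G → density G ≤ κ)
    (Y : Set X) : closure Y ⊆ kappaClosure κ Y :=
  closure_minimal (subset_kappaClosure (one_le_aleph0.trans hκ) Y)
    ((isKappaClosed_kappaClosure hκ Y).isClosed hcl)

theorem density_le_of_forall_isClosed (hκ : ℵ₀ ≤ κ)
    (hcl : ∀ G : Set X, IsClosed G → density G ≤ κ) (Y : Set X) : density Y ≤ κ := by
  obtain ⟨s, hs, hcard⟩ := exists_dense_mk_eq_density (closure Y)
  set D := ((↑) : closure Y → X) '' s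
  have hDκ : #D ≤ κ := mk_image_le.trans (hcard.trans_le (hcl _ isClosed_closure))
  obtain ⟨E, hEY, hEκ, hDE⟩ := exists_subset_closure_of_subset_kappaClosure hκ
    ((Subtype.coe_image_subset _ s).trans (closure_subset_kappaClosure hκ hcl Y)) hDκ
  have hYD : Y ⊆ closure D := subset_closure.trans (Subtype.dense_iff.1 hs)
  exact (density_le_mk_of_subset_closure hEY
    (hYD.trans (closure_minimal hDE isClosed_closure))).trans hEκ

end KappaClosed

/-- For a compact Hausdorff space `K`, the hereditary density `hd(K)` equals the supremum
of the densities `d(C)` over all closed subspaces `C ⊆ K`. -/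
theorem hereditaryDensity_eq_sup_density_closed
    (K : Type u) [TopologicalSpace K] [CompactSpace K] [T2Space K] :
    hereditaryDensity K = ⨆ C : {C : Set K // IsClosed C}, density (C : Set K) := by
  set κ := ⨆ C : {C : Set K // IsClosed C}, density (C : Set K)
  have hclosed : ∀ G : Set K, IsClosed G → density G ≤ κ := fun G hG =>
    le_ciSup (f := fun C : {C : Set K // IsClosed C} => density (C : Set K))
      bddAbove_of_small ⟨G, hG⟩
  refine le_antisymm (ciSup_le' fun Y => ?_)
    (ciSup_le' fun C => le_ciSup bddAbove_of_small (C : Set K))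
  rcases finite_or_infinite K with hfin | hinf
  · exact hclosed Y Y.toFinite.isClosed
  · have : Infinite (univ : Set K) := infinite_univ.to_subtype
    have hκ : ℵ₀ ≤ κ := aleph0_le_density.trans (hclosed univ isClosed_univ)
    exact density_le_of_forall_isClosed hκ hclosed Y
end

section
/- Let K be a non-empty closed subset of 2^{ω₁} satisfying conditions (R4) and (R8). Then every uncountable semi-bidiscrete sequence ⟨(x⁰_α, x¹_α) : α < ω₁⟩ in K is ω-determined. -/
/-! Two distinct points of `K` with the same trace on `ω` first differ at a coordinate `δ`
with `ω ≤ δ < ω₁`, and by (R4)(ii) their common restriction to `δ` is the split point `s_δ`.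
By (R8) a point extends at most one split point, so three distinct points of one fibre would
pairwise split at the same coordinate, which is impossible with two values. Hence each fibre
has at most two points. The pairs `(x⁰_α, x¹_α)` of a semi-bidiscrete sequence are pairwise
distinct, since for `β < α` the function `f_α` separates `x⁰_α` from `x¹_α` but not `x⁰_β`
from `x¹_β`; so only finitely many `α` have both points in a given fibre. -/

noncomputable section

open Cardinal Set

/-- The first uncountable ordinal `ω₁`. -/
def ω1 : Ordinal.{0} := (Cardinal.aleph 1).ord

/-- We represent an element of the Cantor cube `2^α` (for an ordinal `α`) as a function
`Ordinal → Bool` vanishing on coordinates `≥ α`. `truncate α x` is the restriction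
`x↾α` of `x` to `α` in this representation. -/
def truncate (α : Ordinal.{0}) (x : Ordinal.{0} → Bool) : Ordinal.{0} → Bool :=
  fun β => if β < α then x β else false

/-- Condition (R4) for `K ⊆ 2^{ω₁}` with split points `s_α ∈ 2^α` (for `ω ≤ α < ω₁`):
(i) both extensions of `s_α` by `0` and by `1` at coordinate `α` belong to
`K_{α+1} = {x↾(α+1) : x ∈ K}`, and (ii) whenever `u, v ∈ K_{α+1}` satisfy `u↾α = v↾α`
and `u(α) ≠ v(α)`, then `u↾α = s_α`. -/
def CondR4 (K : Set (Ordinal.{0} → Bool)) (s : Ordinal.{0} → Ordinal.{0} → Bool) : Prop :=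
  ∀ α : Ordinal.{0}, Ordinal.omega0 ≤ α → α < ω1 →
    truncate α (s α) = s α ∧
    (∀ b : Bool, Function.update (s α) α b ∈ truncate (α + 1) '' K) ∧
    (∀ u ∈ truncate (α + 1) '' K, ∀ v ∈ truncate (α + 1) '' K,
      truncate α u = truncate α v → u α ≠ v α → truncate α u = s α)

/-- Condition (R8): whenever `ω ≤ α < β < ω₁`, `s_β↾α ≠ s_α`. -/
def CondR8 (s : Ordinal.{0} → Ordinal.{0} → Bool) : Prop :=
  ∀ α β : Ordinal.{0}, Ordinal.omega0 ≤ α → α < β → β < ω1 →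
    truncate α (s β) ≠ s α

/-- A sequence `⟨(x⁰_α, x¹_α) : α ∈ I⟩` (for a linearly ordered index `I`) of pairs of
points of a space `X` is a *semi-bidiscrete sequence* in `X` if there are continuous
real-valued functions `f_α` with `f_α(x⁰_α) = 0`, `f_α(x¹_α) = 1`,
`f_α(x⁰_β) = f_α(x¹_β)` whenever `β < α`, and `f_α(x⁰_β) = 1 → f_α(x¹_β) = 1`
whenever `β > α`. -/
def IsSemiBidiscreteSeq {X : Type*} [TopologicalSpace X] {I : Type*} [LinearOrder I]
    (x0 x1 : I → X) : Prop :=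
  ∃ f : I → C(X, ℝ), ∀ α,
    f α (x0 α) = 0 ∧ f α (x1 α) = 1 ∧
    (∀ β, β < α → f α (x0 β) = f α (x1 β)) ∧
    (∀ β, α < β → f α (x0 β) = 1 → f α (x1 β) = 1)

/-- A family of pairs of points of `2^{ω₁}` is *ω-determined* if for every `s ∈ 2^ω`
the set of indices `α` with `x⁰_α↾ω = x¹_α↾ω = s` is countable. -/
def OmegaDetermined {I : Type*} (x0 x1 : I → (Ordinal.{0} → Bool)) : Prop :=
  ∀ t : Ordinal.{0} → Bool,
    {α : I | truncate Ordinal.omega0 (x0 α) = t ∧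
      truncate Ordinal.omega0 (x1 α) = t}.Countable

open Ordinal

lemma truncate_truncate {α β : Ordinal.{0}} (h : α ≤ β) (x : Ordinal.{0} → Bool) :
    truncate α (truncate β x) = truncate α x := by
  funext γ
  by_cases hγ : γ < α
  · simp [truncate, hγ, hγ.trans_le h]
  · simp [truncate, hγ]

lemma truncate_congr_lt {α : Ordinal.{0}} {x y : Ordinal.{0} → Bool}
    (h : truncate α x = truncate α y) {γ : Ordinal.{0}} (hγ : γ < α) : x γ = y γ := by
  simpa [truncate, hγ] using congrFun h γ

lemma exists_truncate_eq_apply_ne {x y : Ordinal.{0} → Bool} (hne : x ≠ y) :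
    ∃ δ, truncate δ x = truncate δ y ∧ x δ ≠ y δ := by
  obtain ⟨δ, hδ, hmin⟩ := Ordinal.lt_wf.has_min {δ | x δ ≠ y δ} (Function.ne_iff.1 hne)
  refine ⟨δ, funext fun γ => ?_, hδ⟩
  by_cases hγ : γ < δ
  · simpa [truncate, hγ] using not_not.1 fun h => hmin γ h hγ
  · simp [truncate, hγ]

lemma IsSemiBidiscreteSeq.injective_pair {X I : Type*} [TopologicalSpace X] [LinearOrder I]
    {x0 x1 : I → X} (h : IsSemiBidiscreteSeq x0 x1) :
    Function.Injective fun α => (x0 α, x1 α) := by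
  obtain ⟨f, hf⟩ := h
  refine .of_lt_imp_ne fun β α hβα hpair => ?_
  obtain ⟨h0, h1⟩ := Prod.mk_inj.1 hpair
  have := (hf α).2.2.1 β hβα
  rw [h0, h1, (hf α).1, (hf α).2.1] at this
  exact zero_ne_one this

section Splitting

variable {K : Set (Ordinal.{0} → Bool)} {s : Ordinal.{0} → Ordinal.{0} → Bool}

lemma eq_of_truncate_eq_split (hR8 : CondR8 s) {x : Ordinal.{0} → Bool} {α β : Ordinal.{0}}
    (hα : ω ≤ α) (hβ : ω ≤ β) (hαω1 : α < ω1) (hβω1 : β < ω1)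
    (hxα : truncate α x = s α) (hxβ : truncate β x = s β) : α = β := by
  have key : ∀ {α β}, ω ≤ α → β < ω1 → truncate α x = s α →
      truncate β x = s β → ¬ α < β := fun hα hβω1 hxα hxβ hlt =>
    hR8 _ _ hα hlt hβω1 (by rw [← hxβ, truncate_truncate hlt.le, hxα])
  exact le_antisymm (not_lt.1 (key hβ hαω1 hxβ hxα)) (not_lt.1 (key hα hβω1 hxα hxβ))

lemma truncate_eq_split_of_apply_ne (hR4 : CondR4 K s) {x y : Ordinal.{0} → Bool}
    (hx : x ∈ K) (hy : y ∈ K) {δ : Ordinal.{0}} (hδ : ω ≤ δ) (hδω1 : δ < ω1)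
    (heq : truncate δ x = truncate δ y) (hne : x δ ≠ y δ) : truncate δ x = s δ := by
  have hsucc : δ < δ + 1 := Order.lt_add_one_iff.2 le_rfl
  have := (hR4 δ hδ hδω1).2.2 _ ⟨x, hx, rfl⟩ _ ⟨y, hy, rfl⟩
    (by rw [truncate_truncate hsucc.le, truncate_truncate hsucc.le, heq])
    (by simpa [truncate, hsucc] using hne)
  rwa [truncate_truncate hsucc.le] at this

lemma exists_split_of_ne (hR4 : CondR4 K s) (hKsub : ∀ x ∈ K, truncate ω1 x = x)
    {x y : Ordinal.{0} → Bool} (hx : x ∈ K) (hy : y ∈ K)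
    (hω : truncate ω x = truncate ω y) (hne : x ≠ y) :
    ∃ δ, ω ≤ δ ∧ δ < ω1 ∧ truncate δ x = s δ ∧ truncate δ y = s δ ∧ x δ ≠ y δ := by
  obtain ⟨δ, heq, hδ⟩ := exists_truncate_eq_apply_ne hne
  have hωδ : ω ≤ δ := not_lt.1 fun h => hδ (truncate_congr_lt hω h)
  have hδω1 : δ < ω1 := not_le.1 fun h => hδ (by
    rw [← hKsub x hx, ← hKsub y hy]; simp [truncate, not_lt.2 h])
  have hsplit := truncate_eq_split_of_apply_ne hR4 hx hy hωδ hδω1 heq hδ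
  exact ⟨δ, hωδ, hδω1, hsplit, heq ▸ hsplit, hδ⟩

lemma subsingleton_fiber_diff (hR4 : CondR4 K s) (hR8 : CondR8 s)
    (hKsub : ∀ x ∈ K, truncate ω1 x = x) {x : Ordinal.{0} → Bool} (hx : x ∈ K) :
    ({y | y ∈ K ∧ truncate ω y = truncate ω x} \ {x}).Subsingleton := by
  rintro y ⟨⟨hy, hyx⟩, hxy⟩ z ⟨⟨hz, hzx⟩, hxz⟩
  by_contra hyz
  obtain ⟨δ, hδ, hδω1, hxδ, hyδ, hxyδ⟩ :=
    exists_split_of_ne hR4 hKsub hx hy hyx.symm (Ne.symm hxy)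
  obtain ⟨δ', hδ', hδ'ω1, hxδ', -, hxzδ⟩ :=
    exists_split_of_ne hR4 hKsub hx hz hzx.symm (Ne.symm hxz)
  obtain ⟨δ'', hδ'', hδ''ω1, hyδ'', -, hyzδ⟩ :=
    exists_split_of_ne hR4 hKsub hy hz (hyx.trans hzx.symm) hyz
  obtain rfl := eq_of_truncate_eq_split hR8 hδ' hδ hδ'ω1 hδω1 hxδ' hxδ
  obtain rfl := eq_of_truncate_eq_split hR8 hδ'' hδ' hδ''ω1 hδ'ω1 hyδ'' hyδ
  generalize x δ'' = a, y δ'' = b, z δ'' = c at hxyδ hxzδ hyzδ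
  revert a b c
  decide

lemma finite_fiber (hR4 : CondR4 K s) (hR8 : CondR8 s)
    (hKsub : ∀ x ∈ K, truncate ω1 x = x) (t : Ordinal.{0} → Bool) :
    {y | y ∈ K ∧ truncate ω y = t}.Finite := by
  rcases Set.eq_empty_or_nonempty {y | y ∈ K ∧ truncate ω y = t} with h | ⟨x, hx, rfl⟩
  · exact h ▸ Set.finite_empty
  · exact ((subsingleton_fiber_diff hR4 hR8 hKsub hx).finite.insert x).subset
      (subset_insert_sdiff_singleton x _)

end Splitting

theorem semiBidiscrete_omega_determined_general
    (K : Set (Ordinal.{0} → Bool))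
    (hKsub : ∀ x ∈ K, truncate ω1 x = x)
    (s : Ordinal.{0} → Ordinal.{0} → Bool) (hR4 : CondR4 K s) (hR8 : CondR8 s)
    (x0 x1 : ↥(Set.Iio ω1) → ↥K)
    (hsb : IsSemiBidiscreteSeq x0 x1) :
    OmegaDetermined (fun α => (x0 α : Ordinal.{0} → Bool))
      (fun α => (x1 α : Ordinal.{0} → Bool)) := by
  intro t
  have hfiber : {y : K | truncate ω (y : Ordinal.{0} → Bool) = t}.Finite :=
    ((finite_fiber hR4 hR8 hKsub t).preimage Subtype.val_injective.injOn).subset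
      fun y hy => ⟨y.2, hy⟩
  exact (((hfiber.prod hfiber).preimage hsb.injective_pair.injOn).subset
    fun α hα => hα).countable

/-- Let `K` be a non-empty closed subset of `2^{ω₁}` satisfying conditions (R4) and (R8).
Then every (uncountable) semi-bidiscrete sequence `⟨(x⁰_α, x¹_α) : α < ω₁⟩` in `K` is
ω-determined. -/
theorem semiBidiscrete_omega_determined
    (K : Set (Ordinal.{0} → Bool)) (hKne : K.Nonempty) (hKcl : IsClosed K)
    (hKsub : ∀ x ∈ K, truncate ω1 x = x)
    (s : Ordinal.{0} → Ordinal.{0} → Bool) (hR4 : CondR4 K s) (hR8 : CondR8 s)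
    (x0 x1 : ↥(Set.Iio ω1) → ↥K)
    (hsb : IsSemiBidiscreteSeq x0 x1) :
    OmegaDetermined (fun α => (x0 α : Ordinal.{0} → Bool))
      (fun α => (x1 α : Ordinal.{0} → Bool)) :=
  semiBidiscrete_omega_determined_general K hKsub s hR4 hR8 x0 x1 hsb

end
end
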